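/- Let X_1,...,X_n be i.i.d. from (1-π)F + πH with π ∈ (0,1), F atomless, H discrete with countable support S, and let U_n¹ be the set of values appearing exactly once. Writing X_i = (1−Λ_i)V_i + Λ_i U_i with the usual coupling, (n − |U_n¹|)/n − (1/n)Σ_{i=1}^n Λ_i → 0 almost surely as n → ∞, and hence |U_n¹|/n → 1−π almost surely. -/

import Mathlib

open MeasureTheory ProbabilityTheory Filter
open scoped ENNReal Classical BigOperators

noncomputable section

variable {Ω : Type*}

/-- Indices `i < n` whose observation `X i` appears exactly once in the sample. -/
def uniqueIdx (X : ℕ → Ω → ℝ) (n : ℕ) (ω : Ω) : Finset ℕ :=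
  (Finset.range n).filter (fun i => ((Finset.range n).filter (fun j => X j ω = X i ω)).card = 1)

/-- The Bernoulli(π) law on ℝ, i.e. `(1-π)δ₀ + πδ₁`. -/
def bernoulliLaw (π : ℝ) : Measure ℝ :=
  ENNReal.ofReal (1 - π) • Measure.dirac (0 : ℝ) + ENNReal.ofReal π • Measure.dirac 1

/-! ### Auxiliary lemmas on `bernoulliLaw` -/

lemma bern_compl (π : ℝ) : bernoulliLaw π ({0,1} : Set ℝ)ᶜ = 0 := by
  have hs : MeasurableSet (({0,1} : Set ℝ)ᶜ) :=
    ((measurableSet_singleton (1:ℝ)).insert 0).compl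
  simp only [bernoulliLaw, Measure.add_apply, Measure.smul_apply, smul_eq_mul]
  rw [Measure.dirac_apply' _ hs, Measure.dirac_apply' _ hs]
  simp

lemma bern_one (π : ℝ) : bernoulliLaw π {1} = ENNReal.ofReal π := by
  have hs : MeasurableSet ({1} : Set ℝ) := measurableSet_singleton 1
  simp only [bernoulliLaw, Measure.add_apply, Measure.smul_apply, smul_eq_mul]
  rw [Measure.dirac_apply' _ hs, Measure.dirac_apply' _ hs]
  simp

lemma integrable_id_dirac (a : ℝ) : Integrable (fun x : ℝ => x) (Measure.dirac a) := by
  refine (integrable_const a).congr ?_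
  rw [ae_dirac_eq]
  exact Filter.eventually_pure.2 rfl

lemma bern_integral (π : ℝ) (h0 : 0 ≤ π) : ∫ x, x ∂(bernoulliLaw π) = π := by
  unfold bernoulliLaw
  rw [integral_add_measure ((integrable_id_dirac 0).smul_measure (by simp))
      ((integrable_id_dirac 1).smul_measure (by simp)),
    integral_smul_measure, integral_smul_measure, integral_dirac, integral_dirac]
  simp [ENNReal.toReal_ofReal h0]

/-! ### Deterministic combinatorial lemmas -/

section det
variable {x a v u : ℕ → ℝ} {S : Set ℝ}

lemma mem_unique_of_zero (h01 : ∀ i, a i = 0 ∨ a i = 1)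
    (hx : ∀ i, x i = (1 - a i) * v i + a i * u i)
    (hv : ∀ i j, i ≠ j → v i ≠ v j) (hvS : ∀ i, v i ∉ S) (huS : ∀ i, u i ∈ S)
    {n i : ℕ} (hi : i ∈ Finset.range n) (hai : a i = 0) :
    i ∈ uniqueIdx (fun i _ => x i) n () := by
  have hxi : x i = v i := by rw [hx i, hai]; ring
  simp only [uniqueIdx, Finset.mem_filter]
  refine ⟨hi, ?_⟩
  have hset : (Finset.range n).filter (fun j => x j = x i) = {i} := by
    ext j
    simp only [Finset.mem_filter, Finset.mem_singleton]
    constructor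
    · rintro ⟨hj, hxj⟩
      by_contra hne
      rcases h01 j with h0 | h1
      · have hxj' : x j = v j := by rw [hx j, h0]; ring
        exact hv j i hne (by rw [← hxj', ← hxi]; exact hxj)
      · have hxj' : x j = u j := by rw [hx j, h1]; ring
        exact hvS i (by rw [← hxi, ← hxj]; rw [hxj']; exact huS j)
    · rintro rfl; exact ⟨hi, rfl⟩
  rw [hset, Finset.card_singleton]

lemma unique_inj {n i j : ℕ} (hi : i ∈ uniqueIdx (fun i _ => x i) n ())
    (hj : j ∈ uniqueIdx (fun i _ => x i) n ()) (hxe : x i = x j) : i = j := by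
  simp only [uniqueIdx, Finset.mem_filter] at hi hj
  have hiX : i ∈ (Finset.range n).filter (fun k => x k = x j) :=
    Finset.mem_filter.2 ⟨hi.1, hxe⟩
  have hjX : j ∈ (Finset.range n).filter (fun k => x k = x j) :=
    Finset.mem_filter.2 ⟨hj.1, rfl⟩
  exact Finset.card_le_one.1 (le_of_eq hj.2) _ hiX _ hjX

lemma count_eq (h01 : ∀ i, a i = 0 ∨ a i = 1)
    (hx : ∀ i, x i = (1 - a i) * v i + a i * u i)
    (hv : ∀ i j, i ≠ j → v i ≠ v j) (hvS : ∀ i, v i ∉ S) (huS : ∀ i, u i ∈ S) (n : ℕ) :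
    (∑ i ∈ Finset.range n, a i)
      = ((n : ℝ) - (uniqueIdx (fun i _ => x i) n ()).card)
        + ((Finset.range n).filter
            (fun i => a i = 1 ∧ i ∈ uniqueIdx (fun i _ => x i) n ())).card := by
  set Un := uniqueIdx (fun i _ => x i) n () with hUn
  have hsub : Un ⊆ Finset.range n := Finset.filter_subset _ _
  have hsum : (∑ i ∈ Finset.range n, a i)
      = (((Finset.range n).filter (fun i => a i = 1)).card : ℝ) := by
    rw [← Finset.sum_boole]
    refine Finset.sum_congr rfl fun i _ => ?_
    rcases h01 i with h | h <;> simp [h]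
  have hone : ∀ i ∈ Finset.range n, i ∉ Un → a i = 1 := by
    intro i hi hiU
    rcases h01 i with h | h
    · exact absurd (mem_unique_of_zero h01 hx hv hvS huS hi h) hiU
    · exact h
  have hpart : (Finset.range n).filter (fun i => a i = 1)
      = (Finset.range n \ Un) ∪ ((Finset.range n).filter (fun i => a i = 1 ∧ i ∈ Un)) := by
    ext i
    simp only [Finset.mem_filter, Finset.mem_union, Finset.mem_sdiff]
    constructor
    · rintro ⟨hi, hai⟩
      by_cases hiU : i ∈ Un
      · exact Or.inr ⟨hi, hai, hiU⟩
      · exact Or.inl ⟨hi, hiU⟩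
    · rintro (⟨hi, hiU⟩ | ⟨hi, hai, _⟩)
      · exact ⟨hi, hone i hi hiU⟩
      · exact ⟨hi, hai⟩
  have hdisj : Disjoint (Finset.range n \ Un)
      ((Finset.range n).filter (fun i => a i = 1 ∧ i ∈ Un)) := by
    rw [Finset.disjoint_left]
    intro i hi hi'
    exact (Finset.mem_sdiff.1 hi).2 (Finset.mem_filter.1 hi').2.2
  have hcard : ((Finset.range n).filter (fun i => a i = 1)).card
      = (Finset.range n \ Un).card
        + ((Finset.range n).filter (fun i => a i = 1 ∧ i ∈ Un)).card := by
    rw [hpart, Finset.card_union_of_disjoint hdisj]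
  have hsd : ((Finset.range n \ Un).card : ℝ) = (n : ℝ) - Un.card := by
    rw [Finset.card_sdiff_of_subset hsub, Nat.cast_sub (Finset.card_le_card hsub)]
    simp
  rw [hsum, hcard, Nat.cast_add, hsd]

lemma count_le (hx : ∀ i, x i = (1 - a i) * v i + a i * u i)
    (K : Finset ℝ) (n : ℕ) :
    (((Finset.range n).filter
        (fun i => a i = 1 ∧ i ∈ uniqueIdx (fun i _ => x i) n ())).card : ℝ)
      ≤ (K.card : ℝ) + ∑ i ∈ Finset.range n,
          (if a i = 1 ∧ u i ∉ (K : Set ℝ) then (1:ℝ) else 0) := by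
  set T := (Finset.range n).filter (fun i => a i = 1 ∧ i ∈ uniqueIdx (fun i _ => x i) n ()) with hT
  have hsplit : T.card = (T.filter (fun i => u i ∈ (K : Set ℝ))).card
      + (T.filter (fun i => u i ∉ (K : Set ℝ))).card :=
    (Finset.card_filter_add_card_filter_not _).symm
  have h1 : (T.filter (fun i => u i ∈ (K : Set ℝ))).card ≤ K.card := by
    apply Finset.card_le_card_of_injOn u
    · intro i hi
      exact (Finset.mem_filter.1 hi).2
    · intro i hi j hj hij
      have hi' := Finset.mem_filter.1 (Finset.mem_filter.1 hi).1
      have hj' := Finset.mem_filter.1 (Finset.mem_filter.1 hj).1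
      have hxi : x i = u i := by rw [hx i, hi'.2.1]; ring
      have hxj : x j = u j := by rw [hx j, hj'.2.1]; ring
      exact unique_inj hi'.2.2 hj'.2.2 (by rw [hxi, hxj, hij])
  have h2 : ((T.filter (fun i => u i ∉ (K : Set ℝ))).card : ℝ)
      ≤ ∑ i ∈ Finset.range n, (if a i = 1 ∧ u i ∉ (K : Set ℝ) then (1:ℝ) else 0) := by
    rw [Finset.sum_boole]
    have : T.filter (fun i => u i ∉ (K : Set ℝ))
        ⊆ (Finset.range n).filter (fun i => a i = 1 ∧ u i ∉ (K : Set ℝ)) := by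
      intro i hi
      have h1 := Finset.mem_filter.1 hi
      have h2 := Finset.mem_filter.1 h1.1
      exact Finset.mem_filter.2 ⟨h2.1, h2.2.1, h1.2⟩
    exact_mod_cast Nat.cast_le.2 (Finset.card_le_card this)
  calc (T.card : ℝ) = ((T.filter (fun i => u i ∈ (K : Set ℝ))).card : ℝ)
        + ((T.filter (fun i => u i ∉ (K : Set ℝ))).card : ℝ) := by exact_mod_cast hsplit
    _ ≤ (K.card : ℝ) + _ := add_le_add (by exact_mod_cast h1) h2

lemma det_tendsto (h01 : ∀ i, a i = 0 ∨ a i = 1)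
    (hx : ∀ i, x i = (1 - a i) * v i + a i * u i)
    (hv : ∀ i j, i ≠ j → v i ≠ v j) (hvS : ∀ i, v i ∉ S) (huS : ∀ i, u i ∈ S)
    (π : ℝ) (Sk : ℕ → Finset ℝ) (m : ℕ → ℝ)
    (hm : Tendsto m atTop (nhds 0))
    (hY : ∀ k, Tendsto (fun n : ℕ => (∑ i ∈ Finset.range n,
        (if a i = 1 ∧ u i ∉ (↑(Sk k) : Set ℝ) then (1:ℝ) else 0)) / n) atTop (nhds (m k)))
    (ha : Tendsto (fun n : ℕ => (∑ i ∈ Finset.range n, a i) / n) atTop (nhds π)) :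
    Tendsto (fun n : ℕ => ((n:ℝ) - ((uniqueIdx (fun i _ => x i) n ()).card : ℝ)) / n
        - (1/(n:ℝ)) * ∑ i ∈ Finset.range n, a i) atTop (nhds 0) ∧
    Tendsto (fun n : ℕ => ((uniqueIdx (fun i _ => x i) n ()).card : ℝ) / n)
      atTop (nhds (1 - π)) := by
  set c : ℕ → ℝ := fun n => ((uniqueIdx (fun i _ => x i) n ()).card : ℝ) with hc
  set D : ℕ → ℝ := fun n => (∑ i ∈ Finset.range n, a i) / n - ((n:ℝ) - c n) / n with hD
  set T : ℕ → Finset ℕ := fun n => (Finset.range n).filter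
    (fun i => a i = 1 ∧ i ∈ uniqueIdx (fun i _ => x i) n ()) with hT
  have hDn : ∀ n, D n = ((T n).card : ℝ) / n := by
    intro n
    have := count_eq h01 hx hv hvS huS n
    rw [hD]
    simp only
    rw [this]
    ring
  have hD0 : ∀ n, 0 ≤ D n := by
    intro n; rw [hDn n]; positivity
  have hDlim : Tendsto D atTop (nhds 0) := by
    rw [NormedAddCommGroup.tendsto_nhds_zero]
    intro ε hε
    obtain ⟨k, hk⟩ : ∃ k, m k < ε / 2 :=
      (hm.eventually_lt_const (by linarith : (0:ℝ) < ε/2)).exists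
    have hrhs : Tendsto (fun n : ℕ => ((Sk k).card : ℝ) / n + (∑ i ∈ Finset.range n,
        (if a i = 1 ∧ u i ∉ (↑(Sk k) : Set ℝ) then (1:ℝ) else 0)) / n) atTop
        (nhds (0 + m k)) := (tendsto_const_div_atTop_nhds_zero_nat _).add (hY k)
    have hlt : ∀ᶠ n in atTop, ((Sk k).card : ℝ) / n + (∑ i ∈ Finset.range n,
        (if a i = 1 ∧ u i ∉ (↑(Sk k) : Set ℝ) then (1:ℝ) else 0)) / n < ε :=
      hrhs.eventually_lt_const (by linarith)
    filter_upwards [hlt, eventually_ge_atTop 1] with n hn hn1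
    have hnpos : (0:ℝ) < n := by exact_mod_cast hn1
    have hb : D n ≤ ((Sk k).card : ℝ) / n + (∑ i ∈ Finset.range n,
        (if a i = 1 ∧ u i ∉ (↑(Sk k) : Set ℝ) then (1:ℝ) else 0)) / n := by
      rw [hDn n, ← add_div]
      exact div_le_div_of_nonneg_right (count_le hx (Sk k) n) hnpos.le
    rw [Real.norm_eq_abs, abs_of_nonneg (hD0 n)]
    exact lt_of_le_of_lt hb hn
  constructor
  · have : (fun n : ℕ => ((n:ℝ) - c n) / n - (1/(n:ℝ)) * ∑ i ∈ Finset.range n, a i)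
        = fun n => -(D n) := by
      funext n; rw [hD]; ring
    rw [this]
    simpa using hDlim.neg
  · have h2 : Tendsto (fun n : ℕ => 1 - ((∑ i ∈ Finset.range n, a i) / n - D n)) atTop
        (nhds (1 - (π - 0))) := tendsto_const_nhds.sub (ha.sub hDlim)
    simp only [sub_zero] at h2
    refine h2.congr' ?_
    filter_upwards [eventually_ge_atTop 1] with n hn1
    have hnpos : (0:ℝ) < n := by exact_mod_cast hn1
    rw [hD]
    field_simp
    simp only [hc]
    ring
end det

/-- the proportion of uniquely-appearing observations converges a.s. to `1−π`;
more precisely `(n − |U_n¹|)/n − (1/n)ΣΛᵢ → 0` a.s., and hence `|U_n¹|/n → 1−π` a.s. -/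
theorem stmt13 [MeasurableSpace Ω] (P : Measure Ω) [IsProbabilityMeasure P]
    (X Λ V U : ℕ → Ω → ℝ)
    (hΛmeas : ∀ i, Measurable (Λ i)) (hVmeas : ∀ i, Measurable (V i))
    (hUmeas : ∀ i, Measurable (U i))
    (π : ℝ) (hπ : π ∈ Set.Ioo (0 : ℝ) 1)
    (F Hm : Measure ℝ) [IsProbabilityMeasure F] [IsProbabilityMeasure Hm]
    (hFatomless : ∀ x : ℝ, F {x} = 0)
    (S : Set ℝ) (hS : S.Countable) (hHS : Hm Sᶜ = 0) (hatom : ∀ x ∈ S, 0 < Hm {x})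
    (hcoupling : ∀ i ω, X i ω = (1 - Λ i ω) * V i ω + Λ i ω * U i ω)
    (hindep : iIndepFun
      (fun p : ℕ × Fin 3 => ![Λ p.1, V p.1, U p.1] p.2) P)
    (hlawΛ : ∀ i, Measure.map (Λ i) P = bernoulliLaw π)
    (hlawV : ∀ i, Measure.map (V i) P = F)
    (hlawU : ∀ i, Measure.map (U i) P = Hm) :
    ∀ᵐ ω ∂P,
      Tendsto (fun n : ℕ =>
          ((n : ℝ) - ((uniqueIdx X n ω).card : ℝ)) / (n : ℝ)
            - (1 / (n : ℝ)) * ∑ i ∈ Finset.range n, Λ i ω)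
        atTop (nhds 0) ∧
      Tendsto (fun n : ℕ => ((uniqueIdx X n ω).card : ℝ) / (n : ℝ))
        atTop (nhds (1 - π)) := by
  obtain ⟨hπ0, hπ1⟩ := hπ
  haveI : NullSingletonClass F := ⟨hFatomless⟩
  have hfammeas : ∀ p : ℕ × Fin 3,
      Measurable ((fun p : ℕ × Fin 3 => ![Λ p.1, V p.1, U p.1] p.2) p) := by
    rintro ⟨i, j⟩
    fin_cases j
    · exact hΛmeas i
    · exact hVmeas i
    · exact hUmeas i
  -- Λ takes values in {0,1} a.s.
  have hΛ01i : ∀ i, ∀ᵐ ω ∂P, Λ i ω = 0 ∨ Λ i ω = 1 := by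
    intro i
    have hs : MeasurableSet (({0,1} : Set ℝ)ᶜ) :=
      ((measurableSet_singleton (1:ℝ)).insert 0).compl
    have h0 : P (Λ i ⁻¹' ({0,1} : Set ℝ)ᶜ) = 0 := by
      rw [← Measure.map_apply (hΛmeas i) hs, hlawΛ i, bern_compl]
    rw [ae_iff]
    refine measure_mono_null ?_ h0
    intro ω hω
    simp only [Set.mem_setOf_eq, not_or] at hω
    simp [hω.1, hω.2]
  have hΛ01 : ∀ᵐ ω ∂P, ∀ i, Λ i ω = 0 ∨ Λ i ω = 1 := ae_all_iff.2 hΛ01i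
  -- the V i are a.s. pairwise distinct
  have hVne : ∀ᵐ ω ∂P, ∀ i j, i ≠ j → V i ω ≠ V j ω := by
    rw [ae_all_iff]
    intro i
    rw [ae_all_iff]
    intro j
    rcases eq_or_ne i j with rfl | hij
    · filter_upwards with ω h using absurd rfl h
    · have hind : IndepFun (V i) (V j) P :=
        hindep.indepFun (i := (i,1)) (j := (j,1)) (by simp [hij])
      have hmap : P.map (fun ω => (V i ω, V j ω)) = F.prod F := by
        rw [(indepFun_iff_map_prod_eq_prod_map_map (hVmeas i).aemeasurable
            (hVmeas j).aemeasurable).1 hind, hlawV i, hlawV j]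
      have hdiag : MeasurableSet {p : ℝ × ℝ | p.1 = p.2} :=
        measurableSet_eq_fun measurable_fst measurable_snd
      have h0 : P {ω | V i ω = V j ω} = 0 := by
        have hpre : {ω | V i ω = V j ω}
            = (fun ω => (V i ω, V j ω)) ⁻¹' {p : ℝ × ℝ | p.1 = p.2} := rfl
        rw [hpre, ← Measure.map_apply ((hVmeas i).prodMk (hVmeas j)) hdiag, hmap,
          Measure.prod_apply hdiag]
        have hz : ∀ x : ℝ, F (Prod.mk x ⁻¹' {p : ℝ × ℝ | p.1 = p.2}) = 0 := by
          intro x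
          have : Prod.mk x ⁻¹' {p : ℝ × ℝ | p.1 = p.2} = {x} := by
            ext y; simp [eq_comm]
          rw [this, hFatomless]
        simp [hz]
      rw [ae_iff]
      refine measure_mono_null ?_ h0
      intro ω hω
      simp only [Set.mem_setOf_eq] at hω ⊢
      by_contra hne
      exact hω fun _ => hne
  -- the V i avoid S a.s.
  have hVSi : ∀ i, ∀ᵐ ω ∂P, V i ω ∉ S := by
    intro i
    have h0 : P (V i ⁻¹' S) = 0 := by
      rw [← Measure.map_apply (hVmeas i) hS.measurableSet, hlawV i, hS.measure_zero]
    rw [ae_iff]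
    refine measure_mono_null ?_ h0
    intro ω hω
    simpa using hω
  have hVS : ∀ᵐ ω ∂P, ∀ i, V i ω ∉ S := ae_all_iff.2 hVSi
  -- the U i lie in S a.s.
  have hUS : ∀ᵐ ω ∂P, ∀ i, U i ω ∈ S := by
    rw [ae_all_iff]
    intro i
    have h0 : P (U i ⁻¹' Sᶜ) = 0 := by
      rw [← Measure.map_apply (hUmeas i) hS.measurableSet.compl, hlawU i, hHS]
    rw [ae_iff]
    exact measure_mono_null (fun ω hω => hω) h0
  -- SLLN for Λ
  have hpairΛ : Pairwise (Function.onFun (IndepFun · · P) Λ) := by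
    intro i j hij
    exact hindep.indepFun (i := (i,0)) (j := (j,0)) (by simp [hij])
  have hintΛ : Integrable (Λ 0) P := by
    refine Integrable.mono' (integrable_const 1) (hΛmeas 0).aestronglyMeasurable ?_
    filter_upwards [hΛ01i 0] with ω h
    rcases h with h | h <;> simp [h]
  have hidΛ : ∀ i, IdentDistrib (Λ i) (Λ 0) P P := fun i =>
    ⟨(hΛmeas i).aemeasurable, (hΛmeas 0).aemeasurable, by rw [hlawΛ i, hlawΛ 0]⟩
  have hmeanΛ : ∫ ω, Λ 0 ω ∂P = π := by
    have h1 : ∫ x, x ∂(Measure.map (Λ 0) P) = ∫ ω, Λ 0 ω ∂P :=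
      integral_map (hΛmeas 0).aemeasurable aestronglyMeasurable_id
    rw [← h1, hlawΛ 0, bern_integral _ hπ0.le]
  have hSLLNΛ : ∀ᵐ ω ∂P,
      Tendsto (fun n : ℕ => (∑ i ∈ Finset.range n, Λ i ω) / n) atTop (nhds π) := by
    have := strong_law_ae_real Λ hintΛ hpairΛ hidΛ
    rwa [hmeanΛ] at this
  -- enumeration of S by finite sets
  have hSne : S.Nonempty := by
    by_contra h
    rw [Set.not_nonempty_iff_eq_empty] at h
    rw [h] at hHS
    simp at hHS
  obtain ⟨e, he⟩ := hS.exists_eq_range hSne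
  set SK : ℕ → Finset ℝ := fun k => (Finset.range k).image e with hSK
  have hmono : Antitone (fun k => (↑(SK k) : Set ℝ)ᶜ) := by
    intro k l hkl
    apply Set.compl_subset_compl.2
    intro y hy
    simp only [hSK, Finset.coe_image, Set.mem_image, Finset.mem_coe, Finset.mem_range] at hy ⊢
    obtain ⟨m, hm, rfl⟩ := hy
    exact ⟨m, lt_of_lt_of_le hm hkl, rfl⟩
  have hiInter : (⋂ k, (↑(SK k) : Set ℝ)ᶜ) = Sᶜ := by
    rw [← Set.compl_iUnion]
    congr 1
    ext y
    simp only [Set.mem_iUnion, hSK, Finset.coe_image, Set.mem_image, Finset.mem_coe,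
      Finset.mem_range, he, Set.mem_range]
    constructor
    · rintro ⟨k, m, _, rfl⟩; exact ⟨m, rfl⟩
    · rintro ⟨m, rfl⟩; exact ⟨m + 1, m, Nat.lt_succ_self m, rfl⟩
  have hHmlim : Tendsto (fun k => Hm (↑(SK k) : Set ℝ)ᶜ) atTop (nhds 0) := by
    have := tendsto_measure_iInter_atTop (μ := Hm) (s := fun k => (↑(SK k) : Set ℝ)ᶜ)
      (fun k => ((SK k).measurableSet.compl).nullMeasurableSet) hmono ⟨0, measure_ne_top _ _⟩
    rw [hiInter, hHS] at this
    exact this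
  set g : ℕ → ℝ := fun k => π * (Hm (↑(SK k) : Set ℝ)ᶜ).toReal with hg
  have hglim : Tendsto g atTop (nhds 0) := by
    have h1 : Tendsto (fun k => (Hm (↑(SK k) : Set ℝ)ᶜ).toReal) atTop (nhds 0) := by
      have := (ENNReal.tendsto_toReal (a := 0) (by simp)).comp hHmlim
      simpa [Function.comp_def] using this
    have := h1.const_mul π
    simpa using this
  -- SLLN for the indicators Y k i
  have hpairPair : ∀ i j : ℕ, i ≠ j →
      IndepFun (fun ω => (Λ i ω, U i ω)) (fun ω => (Λ j ω, U j ω)) P := by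
    intro i j hij
    exact hindep.indepFun_prodMk_prodMk hfammeas (i,0) (i,2) (j,0) (j,2)
      (by simp [hij]) (by simp [hij]) (by simp [hij]) (by simp [hij])
  have hlawPair : ∀ i : ℕ, P.map (fun ω => (Λ i ω, U i ω)) = (bernoulliLaw π).prod Hm := by
    intro i
    have hind : IndepFun (Λ i) (U i) P :=
      hindep.indepFun (i := (i,0)) (j := (i,2)) (by simp)
    rw [(indepFun_iff_map_prod_eq_prod_map_map (hΛmeas i).aemeasurable
        (hUmeas i).aemeasurable).1 hind, hlawΛ i, hlawU i]
  have hSLLNY : ∀ k : ℕ, ∀ᵐ ω ∂P, Tendsto (fun n : ℕ => (∑ i ∈ Finset.range n,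
      (if Λ i ω = 1 ∧ U i ω ∉ (↑(SK k) : Set ℝ) then (1:ℝ) else 0)) / n) atTop
      (nhds (g k)) := by
    intro k
    set φ : ℝ × ℝ → ℝ := fun q => if q.1 = 1 ∧ q.2 ∉ (↑(SK k) : Set ℝ) then 1 else 0 with hφ
    have hsq : MeasurableSet {q : ℝ × ℝ | q.1 = 1 ∧ q.2 ∉ (↑(SK k) : Set ℝ)} := by
      have : {q : ℝ × ℝ | q.1 = 1 ∧ q.2 ∉ (↑(SK k) : Set ℝ)}
          = Prod.fst ⁻¹' {1} ∩ Prod.snd ⁻¹' (↑(SK k) : Set ℝ)ᶜ := rfl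
      rw [this]
      exact (measurable_fst (measurableSet_singleton 1)).inter
        (measurable_snd (SK k).measurableSet.compl)
    have hφmeas : Measurable φ :=
      Measurable.ite hsq measurable_const measurable_const
    set Y : ℕ → Ω → ℝ := fun i ω => φ (Λ i ω, U i ω) with hY
    have hYmeas : ∀ i, Measurable (Y i) := fun i =>
      hφmeas.comp ((hΛmeas i).prodMk (hUmeas i))
    have hYint : Integrable (Y 0) P := by
      refine Integrable.mono' (integrable_const 1) (hYmeas 0).aestronglyMeasurable ?_
      refine Filter.Eventually.of_forall fun ω => ?_
      rw [hY]
      simp only [hφ]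
      split_ifs <;> simp
    have hYpair : Pairwise (Function.onFun (IndepFun · · P) Y) := fun i j hij =>
      (hpairPair i j hij).comp hφmeas hφmeas
    have hYid : ∀ i, IdentDistrib (Y i) (Y 0) P P := by
      intro i
      have hp : IdentDistrib (fun ω => (Λ i ω, U i ω)) (fun ω => (Λ 0 ω, U 0 ω)) P P :=
        ⟨((hΛmeas i).prodMk (hUmeas i)).aemeasurable,
         ((hΛmeas 0).prodMk (hUmeas 0)).aemeasurable,
         by rw [hlawPair i, hlawPair 0]⟩
      exact hp.comp hφmeas
    have hYmean : ∫ ω, Y 0 ω ∂P = g k := by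
      have hA : (fun ω => Y 0 ω)
          = Set.indicator ((Λ 0 ⁻¹' {1}) ∩ (U 0 ⁻¹' (↑(SK k) : Set ℝ)ᶜ)) (fun _ => (1:ℝ)) := by
        funext ω
        by_cases h : Λ 0 ω = 1 ∧ U 0 ω ∉ (↑(SK k) : Set ℝ)
        · rw [Set.indicator_of_mem (by exact ⟨h.1, h.2⟩)]
          have h2 : U 0 ω ∉ SK k := fun hc => h.2 hc
          simp [hY, hφ, h.1, h2]
        · rw [Set.indicator_of_notMem (by exact fun hc => h ⟨hc.1, hc.2⟩)]
          simp only [hY, hφ]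
          rw [if_neg h]
      have hAmeas : MeasurableSet ((Λ 0 ⁻¹' {1}) ∩ (U 0 ⁻¹' (↑(SK k) : Set ℝ)ᶜ)) :=
        (hΛmeas 0 (measurableSet_singleton 1)).inter
          (hUmeas 0 (SK k).measurableSet.compl)
      rw [hA, integral_indicator_const (1:ℝ) hAmeas]
      have hind : IndepFun (Λ 0) (U 0) P :=
        hindep.indepFun (i := ((0:ℕ),(0:Fin 3))) (j := ((0:ℕ),(2:Fin 3))) (by decide)
      rw [measureReal_def]
      rw [hind.measure_inter_preimage_eq_mul _ _ (measurableSet_singleton 1)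
        (SK k).measurableSet.compl]
      rw [← Measure.map_apply (hΛmeas 0) (measurableSet_singleton 1),
        ← Measure.map_apply (hUmeas 0) (SK k).measurableSet.compl,
        hlawΛ 0, hlawU 0, bern_one]
      rw [ENNReal.toReal_mul, ENNReal.toReal_ofReal hπ0.le]
      simp [hg]
    have := strong_law_ae_real Y hYint hYpair hYid
    rw [hYmean] at this
    filter_upwards [this] with ω hω
    exact hω
  have hSLLNYall : ∀ᵐ ω ∂P, ∀ k : ℕ, Tendsto (fun n : ℕ => (∑ i ∈ Finset.range n,
      (if Λ i ω = 1 ∧ U i ω ∉ (↑(SK k) : Set ℝ) then (1:ℝ) else 0)) / n) atTop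
      (nhds (g k)) := ae_all_iff.2 hSLLNY
  -- combine everything
  filter_upwards [hΛ01, hVne, hVS, hUS, hSLLNΛ, hSLLNYall] with ω h01 hvne hvs hus hslΛ hslY
  have key := det_tendsto (x := fun i => X i ω) (a := fun i => Λ i ω)
    (v := fun i => V i ω) (u := fun i => U i ω) (S := S)
    h01 (fun i => hcoupling i ω) hvne hvs hus π SK g hglim hslY hslΛ
  exact key
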